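/- arXiv:1206.0531 — 2 statements merged into one kernel-verified Lean document; each statement's English description precedes it below -/
import Mathlib

section
/- Let p be an odd prime, q = p^n, and Π : F_q → F_q a planar function. For a,b ∈ F_q define v_{ab} ∈ ℂ^q by (v_{ab})_x = q^{-1/2} ω_p^{tr(aΠ(x)+bx)}, where ω_p = e^{2πi/p} and tr is the trace from F_q to F_p. Then for fixed a ∈ F_q, the set V_a = {v_{ab} : b ∈ F_q} is an orthonormal basis of ℂ^q. -/
/-! The phase `ω_p^{tr(aΠ(x))}` is common to all vectors of `V_a`, so it cancels in their inner
products: `⟪v_{ab}, v_{ab'}⟫ = q⁻¹ ∑ₓ ψ((b' - b)x)` for the additive character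
`ψ = ω_p^{tr(·)}` of `F_q`. Since the trace is onto `F_p`, `ψ` is nontrivial, hence primitive
on the field `F_q`, and the character sum is `q` or `0` according as `b = b'` or not. -/

/-- A function on a finite field is *planar* if every nonzero difference map is a bijection. -/
def IsPlanar {F : Type*} [Field F] (P : F → F) : Prop :=
  ∀ a : F, a ≠ 0 → Function.Bijective (fun x => P (x + a) - P x)

/-- `ω_p^t` for `t ∈ F_p`, i.e. `e^{2πi t/p}`. -/
noncomputable def omegaPow (p : ℕ) (t : ZMod p) : ℂ :=
  Complex.exp (2 * Real.pi * Complex.I * (t.val : ℂ) / (p : ℂ))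

/-- The planar-function MUB vectors `v_{ab}` in `ℂ^q`:
`(v_{ab})_x = q^{-1/2} ω_p^{tr(aΠ(x)+bx)}`. -/
noncomputable def planarVec (p : ℕ) (F : Type*) [Field F] [Fintype F]
    [Algebra (ZMod p) F] (P : F → F) (a b : F) : EuclideanSpace ℂ F :=
  WithLp.toLp 2 fun x => (1 / Real.sqrt (Fintype.card F) : ℝ) *
    omegaPow p (Algebra.trace (ZMod p) F (a * P x + b * x))

theorem orthonormal_addChar_twist {R : Type*} [CommRing R] [Fintype R] {ψ : AddChar R ℂ}
    (hψ : ψ.IsPrimitive) (g : R → R) :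
    Orthonormal ℂ fun b : R => (WithLp.toLp 2 fun x =>
      ((1 / Real.sqrt (Fintype.card R) : ℝ) : ℂ) * ψ (g x + b * x) : EuclideanSpace ℂ R) := by
  classical
  rw [orthonormal_iff_ite]
  intro b b'
  have hq : (0 : ℝ) < Fintype.card R := by positivity
  have hterm : ∀ x : R, (starRingEnd ℂ) (((1 / Real.sqrt (Fintype.card R) : ℝ) : ℂ)
      * ψ (g x + b * x)) * (((1 / Real.sqrt (Fintype.card R) : ℝ) : ℂ) * ψ (g x + b' * x))
      = ((Fintype.card R : ℂ))⁻¹ * ψ (x * (b' - b)) := by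
    intro x
    have hscalar : (1 / Real.sqrt (Fintype.card R)) * (1 / Real.sqrt (Fintype.card R))
        = ((Fintype.card R : ℝ))⁻¹ := by
      rw [div_mul_div_comm, one_mul, Real.mul_self_sqrt hq.le, one_div]
    have hphase : ψ (-(g x + b * x)) * ψ (g x + b' * x) = ψ (x * (b' - b)) := by
      rw [← AddChar.map_add_eq_mul]; congr 1; ring
    rw [map_mul, Complex.conj_ofReal, ← AddChar.map_neg_eq_conj, mul_mul_mul_comm,
      ← Complex.ofReal_mul, hscalar, hphase]
    push_cast; rfl
  simp only [PiLp.inner_apply, RCLike.inner_apply', hterm, ← Finset.mul_sum,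
    AddChar.sum_mulShift _ hψ, sub_eq_zero, eq_comm (a := b')]
  split_ifs <;> simp

/-- The additive character `ω_p^{tr(·)}` of `F`. -/
noncomputable def traceAddChar (p : ℕ) [NeZero p] (F : Type*) [Field F] [Algebra (ZMod p) F] :
    AddChar F ℂ :=
  ZMod.stdAddChar.compAddMonoidHom (Algebra.trace (ZMod p) F).toAddMonoidHom

section traceAddChar

variable (p : ℕ) [NeZero p] (F : Type*) [Field F] [Algebra (ZMod p) F]

theorem omegaPow_trace_eq_traceAddChar (y : F) :
    omegaPow p (Algebra.trace (ZMod p) F y) = traceAddChar p F y := by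
  rw [traceAddChar, AddChar.compAddMonoidHom_apply, ZMod.stdAddChar_apply, ZMod.toCircle_apply,
    omegaPow]
  rfl

theorem traceAddChar_isPrimitive [Fact p.Prime] [Finite F] : (traceAddChar p F).IsPrimitive := by
  refine AddChar.IsPrimitive.of_ne_one (AddChar.ne_one_iff.mpr ?_)
  obtain ⟨y, hy⟩ := Algebra.trace_surjective (ZMod p) F 1
  refine ⟨y, fun h => one_ne_zero (α := ZMod p) ?_⟩
  rwa [traceAddChar, AddChar.compAddMonoidHom_apply, LinearMap.toAddMonoidHom_coe, hy,
    (ZMod.isPrimitive_stdAddChar p).zmod_char_eq_one_iff] at h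

end traceAddChar

theorem planar_mub_orthonormal_basis_general (p : ℕ) [Fact p.Prime]
    (F : Type*) [Field F] [Fintype F] [Algebra (ZMod p) F]
    (P : F → F) (a : F) :
    Orthonormal ℂ (fun b : F => planarVec p F P a b) := by
  convert orthonormal_addChar_twist (traceAddChar_isPrimitive p F) (fun x => a * P x) using 1
  funext b
  simp_rw [planarVec, omegaPow_trace_eq_traceAddChar]

/-- For a planar function `Π` on `F_q` (`q = p^n`, `p` an odd prime), and fixed `a`,
the family `V_a = {v_{ab} : b ∈ F_q}` is an orthonormal basis of `ℂ^q`
(an orthonormal family of `q` vectors in the `q`-dimensional space `ℂ^q`). -/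
theorem planar_mub_orthonormal_basis (p n : ℕ) [Fact p.Prime] (hp : Odd p) (hn : n ≠ 0)
    (F : Type*) [Field F] [Fintype F] [Algebra (ZMod p) F]
    (hcard : Fintype.card F = p ^ n)
    (P : F → F) (hP : IsPlanar P) (a : F) :
    Orthonormal ℂ (fun b : F => planarVec p F P a b) :=
  planar_mub_orthonormal_basis_general p F P a
end

section
/- In the Galois ring GR(4,n) = ℤ₄[x]/(h) with generalized Frobenius automorphism φ, an element α satisfies tr(α) = 0 if and only if there exists β ∈ GR(4,n) with α = β − φ(β), where tr(α) = Σ_{i=0}^{n−1} φ^i(α). -/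
/-!
Reduction modulo `2` maps `ℤ₄[x]/(h)` onto the field `𝔽₂[x]/(h̄)` with `2ⁿ` elements and turns `φ`
into the Frobenius `y ↦ y²`; since `2` is nilpotent, an element whose residue is a unit is a unit.
The trace of `𝔽_{2ⁿ}/𝔽₂` is onto, so some `θ` has `tr θ` a unit, and for `tr α = 0` the classical
Hilbert 90 element `β = (tr θ)⁻¹ ∑_{i<n} (∑_{j<i} φʲ α) φⁱ θ` satisfies `α = β − φ β`.
Conversely `tr (β − φ β)` telescopes to `β − φⁿ β = 0`.
-/

open Polynomial Finset

noncomputable def AdjoinRoot.quotMapKerEquiv {R S : Type*} [CommRing R] [CommRing S]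
    {f : R →+* S} (hf : Function.Surjective f) (p : R[X]) :
    AdjoinRoot p ⧸ (RingHom.ker f).map (of p) ≃+* AdjoinRoot (p.map f) :=
  (quotAdjoinRootEquivQuotPolynomialQuot (RingHom.ker f) p).trans <|
    mapRingEquiv (RingHom.quotientKerEquivOfSurjective hf) _ _ <| by
      rw [Polynomial.map_map]; rfl

theorem FiniteField.exists_sum_range_pow_eq_one (K L : Type*) [Field K] [Field L] [Finite L]
    [Algebra K L] : ∃ x : L, ∑ i ∈ range (Module.finrank K L), x ^ Nat.card K ^ i = 1 := by
  have := Finite.of_injective _ (FaithfulSMul.algebraMap_injective K L)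
  obtain ⟨x, hx⟩ := Algebra.trace_surjective K L 1
  exact ⟨x, by rw [← FiniteField.algebraMap_trace_eq_sum_pow, hx, map_one]⟩

theorem Function.iterate_apply_eq_pow {M N : Type*} [Monoid N] {π : M → N} {f : M → M} {p : ℕ}
    (hf : ∀ x, π (f x) = π x ^ p) (i : ℕ) (x : M) : π (f^[i] x) = π x ^ p ^ i := by
  rw [(Function.Semiconj.iterate_right (gb := (· ^ p)) hf i) x, pow_iterate]

theorem Finset.sum_range_succ_eq_of_apply_eq {M : Type*} [AddCancelCommMonoid M] {g : ℕ → M}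
    {n : ℕ} (hg : g n = g 0) : ∑ i ∈ range n, g (i + 1) = ∑ i ∈ range n, g i := by
  rw [← add_left_inj (g 0), ← sum_range_succ', sum_range_succ, hg]

section IteratedSum

variable {A F : Type*} [FunLike F A A]

theorem sum_range_iterate_sub_apply [AddCommGroup A] [AddMonoidHomClass F A A] (f : F) (n : ℕ)
    (x : A) : ∑ i ∈ range n, f^[i] (x - f x) = x - f^[n] x := by
  simp_rw [iterate_map_sub, ← Function.iterate_succ_apply]
  exact sum_range_sub' (fun i ↦ f^[i] x) n

theorem apply_sum_range_iterate [AddCancelCommMonoid A] [AddMonoidHomClass F A A] (f : F) {n : ℕ}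
    {x : A} (hx : f^[n] x = x) : f (∑ i ∈ range n, f^[i] x) = ∑ i ∈ range n, f^[i] x := by
  simp_rw [map_sum, ← Function.iterate_succ_apply' f]
  exact sum_range_succ_eq_of_apply_eq (g := fun i ↦ f^[i] x) hx

theorem exists_eq_sub_apply_of_sum_range_iterate_eq_zero [CommRing A] [RingHomClass F A A]
    (φ : F) {n : ℕ} (hφ : ∀ x, φ^[n] x = x) {θ : A} (hθ : IsUnit (∑ i ∈ range n, φ^[i] θ))
    {α : A} (hα : ∑ i ∈ range n, φ^[i] α = 0) : ∃ β, α = β - φ β := by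
  set c := ∑ i ∈ range n, φ^[i] θ
  have hφc : φ c = c := apply_sum_range_iterate φ (hφ θ)
  obtain ⟨d, hcd⟩ := hθ.exists_right_inv
  have hφd : φ d = d := hθ.mul_left_cancel <| by rw [← hφc, ← map_mul, hφc, hcd, map_one]
  set a : ℕ → A := fun i ↦ ∑ j ∈ range i, φ^[j] α
  have hφa (i : ℕ) : φ (a i) = a (i + 1) - α := by
    simp only [a, map_sum, ← Function.iterate_succ_apply' φ, sum_range_succ' _ i,
      Function.iterate_zero_apply, add_sub_cancel_right]
  set S := ∑ i ∈ range n, a i * φ^[i] θ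
  have hφS : φ S = S - α * c :=
    calc φ S = ∑ i ∈ range n, a (i + 1) * φ^[i + 1] θ - α * ∑ i ∈ range n, φ^[i + 1] θ := by
          simp only [S, map_sum, map_mul, hφa, ← Function.iterate_succ_apply' φ, sub_mul,
            sum_sub_distrib, mul_sum]
      _ = S - α * c := by
          rw [sum_range_succ_eq_of_apply_eq (g := fun i ↦ a i * φ^[i] θ) (by simp [a, hα]),
            sum_range_succ_eq_of_apply_eq (g := fun i ↦ φ^[i] θ) (hφ θ)]
  refine ⟨d * S, ?_⟩
  rw [map_mul, hφd, hφS]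
  linear_combination (-α) * hcd

end IteratedSum

namespace GaloisRing

abbrev castModTwo : ZMod 4 →+* ZMod 2 := ZMod.castHom (by norm_num) (ZMod 2)

theorem ker_castModTwo : RingHom.ker castModTwo = Ideal.span {2} := by
  ext x
  simp only [RingHom.mem_ker, Ideal.mem_span_singleton]
  revert x
  decide

variable (h : (ZMod 4)[X])

theorem isNilpotent_two : IsNilpotent (2 : AdjoinRoot h) :=
  ⟨2, by rw [← map_ofNat (AdjoinRoot.of h) 2, ← map_pow, show (2 : ZMod 4) ^ 2 = 0 by decide,
    map_zero]⟩

theorem span_two_eq_map_ker_castModTwo :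
    Ideal.span {(2 : AdjoinRoot h)} = (RingHom.ker castModTwo).map (AdjoinRoot.of h) := by
  rw [ker_castModTwo, Ideal.map_span, Set.image_singleton, map_ofNat]

noncomputable def residue : AdjoinRoot h →+* AdjoinRoot (h.map castModTwo) :=
  (AdjoinRoot.quotMapKerEquiv (f := castModTwo) (ZMod.castHom_surjective _) h).toRingHom.comp
    (Ideal.Quotient.mk _)

theorem residue_surjective : Function.Surjective (residue h) :=
  (AdjoinRoot.quotMapKerEquiv (f := castModTwo) _ h).surjective.comp Ideal.Quotient.mk_surjective

theorem residue_eq_of_sub_mem {x y : AdjoinRoot h} (hxy : x - y ∈ Ideal.span {2}) :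
    residue h x = residue h y := by
  rw [span_two_eq_map_ker_castModTwo] at hxy
  simp only [residue, RingHom.comp_apply, Ideal.Quotient.eq.mpr hxy]

theorem isUnit_of_isUnit_residue {x : AdjoinRoot h} (hx : IsUnit (residue h x)) : IsUnit x := by
  have := isLocalHom_of_le_jacobson_bot _ <|
    (span_two_eq_map_ker_castModTwo h).symm.trans_le <| Ideal.span_le.mpr <| by
      simpa using Ideal.mem_jacobson_bot.mpr fun y ↦
        ((Commute.all _ y).isNilpotent_mul_right (isNilpotent_two h)).isUnit_add_one
  exact (isUnit_map_iff (Ideal.Quotient.mk _) x).mp ((MulEquiv.isUnit_map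
    (AdjoinRoot.quotMapKerEquiv (f := castModTwo) (ZMod.castHom_surjective _) h)).mp hx)

variable {h}

theorem exists_sum_range_pow_two_pow_eq_one (hmonic : h.Monic)
    (hirr : Irreducible (h.map castModTwo)) :
    ∃ y : AdjoinRoot (h.map castModTwo), ∑ i ∈ range h.natDegree, y ^ 2 ^ i = 1 := by
  have : Fact (Irreducible (h.map castModTwo)) := ⟨hirr⟩
  let pb := AdjoinRoot.powerBasis' (hmonic.map castModTwo)
  have := pb.finite
  have := Module.finite_of_finite (ZMod 2) (M := AdjoinRoot (h.map castModTwo))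
  simpa [pb.finrank, pb, hmonic.natDegree_map] using
    FiniteField.exists_sum_range_pow_eq_one (ZMod 2) (AdjoinRoot (h.map castModTwo))

end GaloisRing

/-- Additive Hilbert 90 for the Galois ring `GR(4,n) = ℤ₄[x]/(h)`, where `h` is a monic
basic irreducible polynomial of degree `n` and `φ` is the generalized Frobenius
automorphism (the automorphism with `φ(x) ≡ x² mod 2` and `φⁿ = id`):
`tr(α) = Σ_{i<n} φⁱ(α) = 0` iff `α = β − φ(β)` for some `β`. -/
theorem galois_ring_trace_zero_iff (n : ℕ)
    (h : Polynomial (ZMod 4)) (hmonic : h.Monic) (hdeg : h.natDegree = n)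
    (hirr : Irreducible (h.map (ZMod.castHom (by norm_num : (2 : ℕ) ∣ 4) (ZMod 2))))
    (φ : AdjoinRoot h ≃+* AdjoinRoot h)
    (hFrob : ∀ x : AdjoinRoot h, φ x - x ^ 2 ∈ Ideal.span ({2} : Set (AdjoinRoot h)))
    (hord : ∀ x : AdjoinRoot h, (⇑φ)^[n] x = x)
    (α : AdjoinRoot h) :
    (∑ i ∈ Finset.range n, (⇑φ)^[i] α) = 0 ↔ ∃ β : AdjoinRoot h, α = β - φ β := by
  refine ⟨fun hα ↦ ?_, ?_⟩
  · have hφ (x : AdjoinRoot h) : GaloisRing.residue h (φ x) = GaloisRing.residue h x ^ 2 := by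
      rw [GaloisRing.residue_eq_of_sub_mem h (hFrob x), map_pow]
    obtain ⟨y, hy⟩ := GaloisRing.exists_sum_range_pow_two_pow_eq_one hmonic hirr
    obtain ⟨θ, rfl⟩ := GaloisRing.residue_surjective h y
    have hθ : IsUnit (∑ i ∈ range n, φ^[i] θ) := by
      refine GaloisRing.isUnit_of_isUnit_residue h ?_
      simp only [map_sum, Function.iterate_apply_eq_pow hφ, ← hdeg, hy, isUnit_one]
    exact exists_eq_sub_apply_of_sum_range_iterate_eq_zero φ hord hθ hα
  · rintro ⟨β, rfl⟩
    rw [sum_range_iterate_sub_apply, hord, sub_self]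
end
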